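/- For integers $k,m$ with $1\le k\le m$ and $\gcd(k,m)=1$ and $m>1$, the rational number $d^{(a)}_{k,m}=\frac{(-1)^k}{m}\cdot\frac{\prod_{j=1}^{m-1}(ma+j+k)}{k!\,(m-k)!}$ is an integer for every integer $a\ge 0$. -/

import Mathlib

open Finset
open scoped Nat

/-!
With `n = m a + k`, the product is `(n+1)(n+2)⋯(n+m-1) = (n+m)! / (n! (n+m))`, so the
number equals `± (binom(m, k) / m) · (binom(n+m, m) / (n+m))`. Both factors are integers,
because `r ∣ binom(r, s)` whenever `gcd(s, r) = 1`, and `gcd(m, n+m) = gcd(m, k) = 1`.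
-/

theorem Nat.Coprime.dvd_choose {k n : ℕ} (h : Nat.Coprime k n) : n ∣ n.choose k := by
  rcases n with _ | n
  · simp_all
  rcases k with _ | k
  · simp_all
  exact h.symm.dvd_of_dvd_mul_right ⟨_, (Nat.add_one_mul_choose_eq n k).symm⟩

theorem Nat.prod_Icc_one_add_eq_ascFactorial (n b : ℕ) :
    ∏ j ∈ Icc 1 b, (n + j) = (n + 1).ascFactorial b := by
  induction b with
  | zero => simp
  | succ b ih =>
    rw [prod_Icc_succ_top (by omega), ih, Nat.ascFactorial_succ]
    ring

theorem Nat.prod_Icc_one_add_mul_eq_choose_mul {n m k : ℕ} (hm : 0 < m) (hkm : k ≤ m) :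
    (∏ j ∈ Icc 1 (m - 1), (n + j)) * (n + m) =
      m.choose k * k ! * (m - k)! * (n + m).choose m := by
  obtain ⟨l, rfl⟩ : ∃ l, m = l + 1 := ⟨m - 1, by omega⟩
  rw [Nat.choose_mul_factorial_mul_factorial hkm, Nat.prod_Icc_one_add_eq_ascFactorial,
    Nat.add_sub_cancel, ← Nat.ascFactorial_eq_factorial_mul_choose, Nat.ascFactorial_succ]
  ring

theorem dOV_coprime_is_integer_general (a k m : ℕ) (hkm : k ≤ m)
    (hm : 1 < m) (hcop : Nat.Coprime k m) :
    ∃ d : ℤ,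
      ((-1 : ℚ) ^ k / (m : ℚ)) *
          ((∏ j ∈ Finset.Icc 1 (m - 1), ((m * a + j + k : ℕ) : ℚ)) /
            ((k.factorial : ℚ) * ((m - k).factorial : ℚ)))
        = (d : ℚ) := by
  set n := m * a + k
  obtain ⟨c₁, hc₁⟩ : m ∣ m.choose k := hcop.dvd_choose
  have hcop' : Nat.Coprime m (n + m) := by
    simpa [n, Nat.coprime_add_self_right, Nat.coprime_mul_right_add_right] using hcop.symm
  obtain ⟨c₂, hc₂⟩ : n + m ∣ (n + m).choose m := hcop'.dvd_choose
  have hprod : ∏ j ∈ Icc 1 (m - 1), (n + j) = m * k ! * (m - k)! * (c₁ * c₂) := by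
    apply Nat.eq_of_mul_eq_mul_right (show 0 < n + m by omega)
    rw [Nat.prod_Icc_one_add_mul_eq_choose_mul (by omega) hkm, hc₁, hc₂]
    ring
  refine ⟨(-1) ^ k * (c₁ * c₂), ?_⟩
  have hcast : ∏ j ∈ Icc 1 (m - 1), ((m * a + j + k : ℕ) : ℚ) =
      ((∏ j ∈ Icc 1 (m - 1), (n + j) : ℕ) : ℚ) := by
    push_cast [n]
    exact prod_congr rfl fun j _ => by ring
  rw [hcast, hprod]
  have : (m : ℚ) ≠ 0 := by positivity
  push_cast
  field_simp

/-- For coprime `k, m` with `1 ≤ k ≤ m`, `m > 1` and any integer `a ≥ 0`, the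
rational number `d^{(a)}_{k,m} = ((-1)^k/m) · ∏_{j=1}^{m-1}(ma+j+k) / (k!(m-k)!)`
is an integer. -/
theorem dOV_coprime_is_integer (a k m : ℕ) (hk : 1 ≤ k) (hkm : k ≤ m)
    (hm : 1 < m) (hcop : Nat.Coprime k m) :
    ∃ d : ℤ,
      ((-1 : ℚ) ^ k / (m : ℚ)) *
          ((∏ j ∈ Finset.Icc 1 (m - 1), ((m * a + j + k : ℕ) : ℚ)) /
            ((k.factorial : ℚ) * ((m - k).factorial : ℚ)))
        = (d : ℚ) :=
  dOV_coprime_is_integer_general a k m hkm hm hcop
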